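/- Let G be an (n, m) graph with m > n. Then the spread of the line graph of G equals q_1, the largest signless Laplacian eigenvalue of G, and S_L(G) = q_1 ≥ S_Q(G) = q_1 - q_n, with equality if and only if G has a bipartite connected component. -/

import Mathlib

open Matrix Polynomial BigOperators

noncomputable section

namespace SpreadPaper

variable {V : Type*}

/-- The adjacency matrix of a simple graph over `ℝ` (classical decidability). -/
noncomputable def adjMat (G : SimpleGraph V) : Matrix V V ℝ :=
  letI := Classical.decRel G.Adj
  G.adjMatrix ℝ

lemma adjMat_isHermitian (G : SimpleGraph V) : (adjMat G).IsHermitian := by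
  letI := Classical.decRel G.Adj
  ext i j
  simp [adjMat, Matrix.conjTranspose_apply, SimpleGraph.adjMatrix_apply, G.adj_comm]

/-- The degree of a vertex (classical decidability). -/
noncomputable def deg [Fintype V] (G : SimpleGraph V) (v : V) : ℕ :=
  letI := Classical.decRel G.Adj
  G.degree v

/-- The signless Laplacian matrix `D + A` of a graph. -/
noncomputable def signQ [Fintype V] [DecidableEq V] (G : SimpleGraph V) : Matrix V V ℝ :=
  Matrix.diagonal (fun v => (deg G v : ℝ)) + adjMat G

lemma signQ_isHermitian [Fintype V] [DecidableEq V] (G : SimpleGraph V) :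
    (signQ G).IsHermitian :=
  (Matrix.isHermitian_diagonal _).add (adjMat_isHermitian G)

/-- The Laplacian matrix `D - A` of a graph. -/
noncomputable def lap [Fintype V] [DecidableEq V] (G : SimpleGraph V) : Matrix V V ℝ :=
  Matrix.diagonal (fun v => (deg G v : ℝ)) - adjMat G

lemma lap_isHermitian [Fintype V] [DecidableEq V] (G : SimpleGraph V) :
    (lap G).IsHermitian :=
  (Matrix.isHermitian_diagonal _).sub (adjMat_isHermitian G)

/-- The largest eigenvalue of a Hermitian real matrix. -/
noncomputable def maxEig {m : Type*} [Fintype m] [DecidableEq m] {A : Matrix m m ℝ}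
    (hA : A.IsHermitian) : ℝ :=
  ⨆ i, hA.eigenvalues i

/-- The smallest eigenvalue of a Hermitian real matrix. -/
noncomputable def minEig {m : Type*} [Fintype m] [DecidableEq m] {A : Matrix m m ℝ}
    (hA : A.IsHermitian) : ℝ :=
  ⨅ i, hA.eigenvalues i

/-- The spread (largest minus smallest eigenvalue) of a Hermitian real matrix. -/
noncomputable def sprd {m : Type*} [Fintype m] [DecidableEq m] {A : Matrix m m ℝ}
    (hA : A.IsHermitian) : ℝ :=
  maxEig hA - minEig hA

/-- `q` lists the eigenvalues of the Hermitian matrix `A` (with multiplicity) in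
nonincreasing order. -/
def IsDescSpectrum {m : Type*} [Fintype m] [DecidableEq m] {A : Matrix m m ℝ}
    (hA : A.IsHermitian) {k : ℕ} (q : Fin k → ℝ) : Prop :=
  Antitone q ∧ ∃ e : Fin k ≃ m, ∀ i, q i = hA.eigenvalues (e i)

noncomputable instance edgeSetFintype [Fintype V] (G : SimpleGraph V) : Fintype G.edgeSet :=
  Set.Finite.fintype (Set.toFinite _)

/-- The number of edges of a graph. -/
noncomputable def numEdges (G : SimpleGraph V) : ℕ := Nat.card G.edgeSet

/-- The total graph of `G`: vertices are the vertices and edges of `G`, with adjacency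
given by adjacency in `G`, adjacency in the line graph, or vertex-edge incidence. -/
def totalGraph (G : SimpleGraph V) : SimpleGraph (V ⊕ G.edgeSet) where
  Adj x y :=
    match x, y with
    | Sum.inl u, Sum.inl v => G.Adj u v
    | Sum.inl u, Sum.inr e => u ∈ (e : Sym2 V)
    | Sum.inr e, Sum.inl u => u ∈ (e : Sym2 V)
    | Sum.inr e, Sum.inr f => e ≠ f ∧ ∃ v, v ∈ (e : Sym2 V) ∧ v ∈ (f : Sym2 V)
  symm := by
    refine ⟨?_⟩
    rintro (u|e) (v|f) h
    · exact G.adj_symm h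
    · exact h
    · exact h
    · exact ⟨h.1.symm, h.2.choose, h.2.choose_spec.2, h.2.choose_spec.1⟩
  loopless := by
    refine ⟨?_⟩
    rintro (u|e) h
    · exact G.irrefl h
    · exact h.1 rfl

/-- The join `G ∨ H` of two graphs: all edges between the two vertex sets are added. -/
def joinG {α β : Type*} (G : SimpleGraph α) (H : SimpleGraph β) : SimpleGraph (α ⊕ β) where
  Adj x y :=
    match x, y with
    | Sum.inl a, Sum.inl b => G.Adj a b
    | Sum.inr a, Sum.inr b => H.Adj a b
    | Sum.inl _, Sum.inr _ => True
    | Sum.inr _, Sum.inl _ => True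
  symm := by
    refine ⟨?_⟩
    rintro (a|a) (b|b) h
    · exact G.adj_symm h
    · exact trivial
    · exact trivial
    · exact H.adj_symm h
  loopless := by
    refine ⟨?_⟩
    rintro (a|a) h
    · exact G.irrefl h
    · exact H.irrefl h

/-- The disjoint union of two graphs. -/
def dunion {α β : Type*} (G : SimpleGraph α) (H : SimpleGraph β) : SimpleGraph (α ⊕ β) where
  Adj x y :=
    match x, y with
    | Sum.inl a, Sum.inl b => G.Adj a b
    | Sum.inr a, Sum.inr b => H.Adj a b
    | Sum.inl _, Sum.inr _ => False
    | Sum.inr _, Sum.inl _ => False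
  symm := by
    refine ⟨?_⟩
    rintro (a|a) (b|b) h
    · exact G.adj_symm h
    · exact h.elim
    · exact h.elim
    · exact H.adj_symm h
  loopless := by
    refine ⟨?_⟩
    rintro (a|a) h
    · exact G.irrefl h
    · exact H.irrefl h

/-- `G` is `r`-regular. -/
def IsReg [Fintype V] (G : SimpleGraph V) (r : ℕ) : Prop := ∀ v, deg G v = r

/-- The minimum degree of a graph. -/
noncomputable def minDeg [Fintype V] (G : SimpleGraph V) : ℕ := sInf (Set.range (deg G))

/-- The maximum degree of a graph. -/
noncomputable def maxDeg [Fintype V] (G : SimpleGraph V) : ℕ := sSup (Set.range (deg G))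

/-- The first Zagreb index of a graph: the sum of the squares of the vertex degrees. -/
noncomputable def zagreb [Fintype V] (G : SimpleGraph V) : ℕ := ∑ v, (deg G v) ^ 2

/-- The vertex connectivity of `G` is at most `k`: some set of at most `k` vertices
disconnects `G`. -/
def HasConnLe (G : SimpleGraph V) (k : ℕ) : Prop :=
  ∃ U : Set V, Nat.card U ≤ k ∧ (Uᶜ).Nonempty ∧ ¬ (G.induce Uᶜ).Preconnected


/-! Let `N` be the vertex–edge incidence matrix of `G`. Then `N Nᵀ = Q(G)` and
`Nᵀ N = A(L(G)) + 2I`; both are positive semidefinite and have the same nonzero spectrum, so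
`λ₁(L(G)) = q₁ - 2`. When `m > n` the matrix `N` has a nonzero kernel vector, so `Nᵀ N` is
singular and `λ_min(L(G)) = -2`, whence `S_L(G) = q₁ ≥ q₁ - q_n = S_Q(G)`. Equality means
`q_n = 0`, i.e. `Nᵀ x = 0` for some `x ≠ 0`: a vector with `x u + x v = 0` along every edge.
Such a vector is `±1` on the two colour classes of a bipartite component, and conversely the
signs of `x` two-colour the component of any vertex where `x` does not vanish. -/

open SimpleGraph
open scoped Pointwise Finset

section Spectrum

variable {K : Type*} [Field K] {m n : Type*} [Fintype m] [DecidableEq m] [Fintype n]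
  [DecidableEq n]

lemma zero_mem_spectrum_iff_exists_mulVec_eq_zero {A : Matrix m m K} :
    0 ∈ spectrum K A ↔ ∃ v ≠ 0, A *ᵥ v = 0 := by
  rw [spectrum.zero_mem_iff, isUnit_iff_isUnit_det, isUnit_iff_ne_zero, not_not,
    exists_mulVec_eq_zero_iff]

lemma spectrum_mul_comm_sdiff_zero (M : Matrix m n K) (N : Matrix n m K) :
    spectrum K (M * N) \ {0} = spectrum K (N * M) \ {0} := by
  ext μ
  simp only [Set.mem_sdiff, Set.mem_singleton_iff, mem_spectrum_iff_isRoot_charpoly]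
  refine and_congr_left fun hμ => ?_
  have h := congrArg (eval μ) (charpoly_mul_comm' M N)
  simp only [eval_mul, eval_pow, eval_X] at h
  rw [IsRoot.def, IsRoot.def, ← mul_eq_zero_iff_left (pow_ne_zero (Fintype.card n) hμ), h,
    mul_eq_zero_iff_left (pow_ne_zero _ hμ)]

lemma spectrum_add_smul_one (A : Matrix m m K) (c : K) :
    spectrum K (A + c • 1) = spectrum K A + {c} := by
  rw [spectrum.add_singleton_eq, Algebra.algebraMap_eq_smul_one]

end Spectrum

section HermitianSpectrum

variable {m : Type*} [Fintype m] [DecidableEq m] {A : Matrix m m ℝ}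

lemma maxEig_eq_sSup_spectrum (hA : A.IsHermitian) : maxEig hA = sSup (spectrum ℝ A) := by
  rw [hA.spectrum_real_eq_range_eigenvalues]; rfl

lemma minEig_eq_sInf_spectrum (hA : A.IsHermitian) : minEig hA = sInf (spectrum ℝ A) := by
  rw [hA.spectrum_real_eq_range_eigenvalues]; rfl

lemma _root_.Matrix.IsHermitian.spectrum_nonempty [Nonempty m] (hA : A.IsHermitian) :
    (spectrum ℝ A).Nonempty := by
  rw [hA.spectrum_real_eq_range_eigenvalues]
  exact Set.range_nonempty _

lemma _root_.Matrix.IsHermitian.sSup_spectrum_add_smul_one [Nonempty m] (hA : A.IsHermitian)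
    (c : ℝ) : sSup (spectrum ℝ (A + c • 1)) = sSup (spectrum ℝ A) + c := by
  rw [spectrum_add_smul_one, csSup_add hA.spectrum_nonempty A.finite_real_spectrum.bddAbove
    (Set.singleton_nonempty c) bddAbove_singleton, csSup_singleton]

lemma _root_.Matrix.IsHermitian.sInf_spectrum_add_smul_one [Nonempty m] (hA : A.IsHermitian)
    (c : ℝ) : sInf (spectrum ℝ (A + c • 1)) = sInf (spectrum ℝ A) + c := by
  rw [spectrum_add_smul_one, csInf_add hA.spectrum_nonempty A.finite_real_spectrum.bddBelow
    (Set.singleton_nonempty c) bddBelow_singleton, csInf_singleton]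

lemma _root_.Matrix.PosSemidef.nonneg_of_mem_spectrum (hA : A.PosSemidef) {μ : ℝ}
    (hμ : μ ∈ spectrum ℝ A) : 0 ≤ μ :=
  (posSemidef_iff_isHermitian_and_spectrum_nonneg.mp hA).2 hμ

lemma _root_.Matrix.PosSemidef.sSup_spectrum_eq_sSup_insert_zero [Nonempty m]
    (hA : A.PosSemidef) : sSup (spectrum ℝ A) = sSup (insert 0 (spectrum ℝ A \ {0})) := by
  obtain ⟨μ, hμ⟩ := hA.1.spectrum_nonempty
  have hbdd := A.finite_real_spectrum.bddAbove
  rw [Set.insert_sdiff_singleton, csSup_insert hbdd ⟨μ, hμ⟩,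
    sup_eq_right.mpr ((hA.nonneg_of_mem_spectrum hμ).trans (le_csSup hbdd hμ))]

lemma _root_.Matrix.PosSemidef.sInf_spectrum_nonneg [Nonempty m] (hA : A.PosSemidef) :
    0 ≤ sInf (spectrum ℝ A) :=
  le_csInf hA.1.spectrum_nonempty fun _ => hA.nonneg_of_mem_spectrum

lemma _root_.Matrix.PosSemidef.sInf_spectrum_eq_zero_iff [Nonempty m] (hA : A.PosSemidef) :
    sInf (spectrum ℝ A) = 0 ↔ 0 ∈ spectrum ℝ A :=
  ⟨fun h => h ▸ hA.1.spectrum_nonempty.csInf_mem A.finite_real_spectrum,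
    fun h => IsLeast.csInf_eq ⟨h, fun _ => hA.nonneg_of_mem_spectrum⟩⟩

end HermitianSpectrum

section Gram

variable {m n : Type*} [Fintype m] [Fintype n]

lemma posSemidef_transpose_mul_self (N : Matrix m n ℝ) : (Nᵀ * N).PosSemidef := by
  simpa using posSemidef_conjTranspose_mul_self N

lemma posSemidef_mul_transpose_self (N : Matrix m n ℝ) : (N * Nᵀ).PosSemidef := by
  simpa using posSemidef_transpose_mul_self Nᵀ

lemma sSup_spectrum_transpose_mul_self [DecidableEq m] [DecidableEq n] [Nonempty m]
    [Nonempty n] (N : Matrix m n ℝ) :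
    sSup (spectrum ℝ (Nᵀ * N)) = sSup (spectrum ℝ (N * Nᵀ)) := by
  rw [(posSemidef_transpose_mul_self N).sSup_spectrum_eq_sSup_insert_zero,
    (posSemidef_mul_transpose_self N).sSup_spectrum_eq_sSup_insert_zero,
    spectrum_mul_comm_sdiff_zero]

lemma zero_mem_spectrum_mul_transpose_iff [DecidableEq m] (N : Matrix m n ℝ) :
    0 ∈ spectrum ℝ (N * Nᵀ) ↔ ∃ v ≠ 0, Nᵀ *ᵥ v = 0 := by
  have h := ker_mulVecLin_transpose_mul_self Nᵀ
  rw [transpose_transpose] at h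
  simp only [zero_mem_spectrum_iff_exists_mulVec_eq_zero, ← mulVecLin_apply,
    ← LinearMap.mem_ker, h]

lemma sInf_spectrum_transpose_mul_self_of_card_lt [DecidableEq n] [Nonempty n]
    (N : Matrix m n ℝ) (h : Fintype.card m < Fintype.card n) :
    sInf (spectrum ℝ (Nᵀ * N)) = 0 := by
  obtain ⟨v, hv, hv0⟩ := (Submodule.ne_bot_iff _).mp
    (LinearMap.ker_ne_bot_of_finrank_lt (f := N.mulVecLin) (by simpa using h))
  have hNv : N *ᵥ v = 0 := hv
  rw [(posSemidef_transpose_mul_self N).sInf_spectrum_eq_zero_iff,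
    zero_mem_spectrum_iff_exists_mulVec_eq_zero]
  exact ⟨v, hv0, by rw [← mulVec_mulVec, hNv, mulVec_zero]⟩

end Gram

section Incidence

variable [DecidableEq V]

open scoped Classical in
/-- Mathlib's `incMatrix` has a column for every element of `Sym2 V`; only the edge columns are
kept, so that `Nᵀ N` is indexed by the vertices of the line graph. -/
def edgeIncMatrix (G : SimpleGraph V) : Matrix V G.edgeSet ℝ :=
  of fun v e => G.incMatrix ℝ v e

variable {G : SimpleGraph V}

lemma edgeIncMatrix_apply (v : V) (e : G.edgeSet) :
    edgeIncMatrix G v e = if v ∈ (e : Sym2 V) then 1 else 0 := by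
  classical
  simp [edgeIncMatrix, incMatrix_apply', incidenceSet]

variable [Fintype V]

lemma transpose_edgeIncMatrix_mulVec_eq_zero_iff {x : V → ℝ} :
    (edgeIncMatrix G)ᵀ *ᵥ x = 0 ↔ ∀ ⦃a b⦄, G.Adj a b → x a + x b = 0 := by
  have happly {a b : V} (h : G.Adj a b) :
      ((edgeIncMatrix G)ᵀ *ᵥ x) ⟨s(a, b), h⟩ = x a + x b := by
    simp only [mulVec, dotProduct, transpose_apply, edgeIncMatrix_apply, Sym2.mem_iff, ite_mul,
      one_mul, zero_mul, Finset.sum_ite, Finset.sum_const_zero, add_zero, Finset.filter_or,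
      Finset.filter_eq', Finset.mem_univ, if_true]
    rw [← Finset.insert_eq, Finset.sum_pair h.ne]
  constructor
  · intro h a b hab
    rw [← happly hab, h, Pi.zero_apply]
  · intro h
    ext ⟨e, he⟩
    induction e using Sym2.ind with
    | _ a b => exact (happly he).trans (h he)

open scoped Classical in
lemma card_common_vertices_of_ne {e f : G.edgeSet} (hef : e ≠ f) :
    #{v | v ∈ (e : Sym2 V) ∧ v ∈ (f : Sym2 V)} = if G.lineGraph.Adj e f then 1 else 0 := by
  have hle : #{v | v ∈ (e : Sym2 V) ∧ v ∈ (f : Sym2 V)} ≤ 1 := by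
    refine Finset.card_le_one.mpr fun u hu w hw => ?_
    simp only [Finset.mem_filter, Finset.mem_univ, true_and] at hu hw
    by_contra huw
    exact hef (Subtype.ext (((Sym2.mem_and_mem_iff huw).1 ⟨hu.1, hw.1⟩).trans
      ((Sym2.mem_and_mem_iff huw).1 ⟨hu.2, hw.2⟩).symm))
  split_ifs with hadj
  · obtain ⟨-, u, hue, huf⟩ := lineGraph_adj_iff_exists.mp hadj
    exact le_antisymm hle (Finset.card_pos.mpr ⟨u, by simp [hue, huf]⟩)
  · rw [Finset.card_eq_zero, Finset.filter_eq_empty_iff]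
    exact fun v _ hv => hadj (lineGraph_adj_iff_exists.mpr ⟨hef, v, hv⟩)

variable (G)

lemma edgeIncMatrix_mul_transpose : edgeIncMatrix G * (edgeIncMatrix G)ᵀ = signQ G := by
  classical
  ext a b
  have hsum : (edgeIncMatrix G * (edgeIncMatrix G)ᵀ) a b =
      (G.incMatrix ℝ * (G.incMatrix ℝ)ᵀ) a b := by
    simp only [mul_apply, transpose_apply, edgeIncMatrix, of_apply]
    rw [← Finset.sum_subtype G.edgeFinset (by simp)
      (fun e => G.incMatrix ℝ a e * G.incMatrix ℝ b e)]
    refine Finset.sum_subset (Finset.subset_univ _) fun e _ he => ?_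
    rw [G.incMatrix_of_notMem_incidenceSet fun h => he (by simpa using G.incidenceSet_subset a h),
      zero_mul]
  rw [hsum, incMatrix_mul_transpose]
  by_cases hab : a = b
  · subst hab
    simp [signQ, adjMat, deg]
  · simp [signQ, adjMat, hab]

lemma transpose_edgeIncMatrix_mul :
    (edgeIncMatrix G)ᵀ * edgeIncMatrix G = adjMat G.lineGraph + (2 : ℝ) • 1 := by
  classical
  ext e f
  have hsum : ((edgeIncMatrix G)ᵀ * edgeIncMatrix G) e f =
      #{v | v ∈ (e : Sym2 V) ∧ v ∈ (f : Sym2 V)} := by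
    simp [mul_apply, edgeIncMatrix_apply, ← ite_and, Finset.sum_boole, and_comm]
  rw [hsum]
  by_cases hef : e = f
  · subst hef
    have h2 : #{v | v ∈ (e : Sym2 V)} = 2 := by
      rw [← Sym2.card_toFinset_of_not_isDiag _ (G.not_isDiag_of_mem_edgeSet e.2)]
      congr 1; ext; simp
    simp [adjMat, h2]
  · simp [adjMat, hef, card_common_vertices_of_ne hef]

end Incidence

section Bipartite

variable {G : SimpleGraph V} {x : V → ℝ}

lemma abs_eq_of_reachable (hx : ∀ ⦃a b⦄, G.Adj a b → x a + x b = 0) {u v : V}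
    (h : G.Reachable u v) : |x u| = |x v| := by
  obtain ⟨p⟩ := h
  induction p with
  | nil => rfl
  | cons hadj _ ih => rw [← ih, eq_neg_of_add_eq_zero_left (hx hadj), abs_neg]

lemma exists_colorable_component_of_add_eq_zero (hx0 : x ≠ 0)
    (hx : ∀ ⦃a b⦄, G.Adj a b → x a + x b = 0) :
    ∃ C : G.ConnectedComponent, (G.induce C.supp).Colorable 2 := by
  obtain ⟨v₀, hv₀⟩ := Function.ne_iff.mp hx0
  refine ⟨G.connectedComponentMk v₀, ?_⟩
  have hne (u : (G.connectedComponentMk v₀).supp) : x u ≠ 0 := by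
    rw [← abs_ne_zero, abs_eq_of_reachable hx (ConnectedComponent.exact u.2)]
    exact abs_ne_zero.mpr hv₀
  let c : (G.induce (G.connectedComponentMk v₀).supp).Coloring Bool :=
    Coloring.mk (fun u => decide (0 < x u)) fun {u w} huw => by
      have hsum := hx (induce_adj.mp huw)
      simp only [ne_eq, decide_eq_decide]
      intro hiff
      rcases (hne u).lt_or_gt with hu | hu
      · linarith [hiff.mpr (by linarith)]
      · linarith [hiff.mp hu]
  simpa using c.colorable

lemma exists_add_eq_zero_of_colorable_component (C : G.ConnectedComponent)
    (hC : (G.induce C.supp).Colorable 2) :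
    ∃ x : V → ℝ, x ≠ 0 ∧ ∀ ⦃a b⦄, G.Adj a b → x a + x b = 0 := by
  classical
  obtain ⟨c⟩ := hC
  refine ⟨fun v => if h : v ∈ C.supp then (-1) ^ (c ⟨v, h⟩ : ℕ) else 0, ?_,
    fun a b hab => ?_⟩
  · obtain ⟨v, hv⟩ := C.nonempty_supp
    exact Function.ne_iff.mpr ⟨v, by simp [hv]⟩
  · by_cases ha : a ∈ C.supp
    · have hb := C.mem_supp_of_adj_mem_supp ha hab
      have hcab : c ⟨a, ha⟩ ≠ c ⟨b, hb⟩ := c.valid hab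
      simp only [ha, hb, dite_true]
      generalize c ⟨a, ha⟩ = i, c ⟨b, hb⟩ = j at hcab
      fin_cases i <;> fin_cases j <;> simp_all
    · have hb : b ∉ C.supp := fun hb => ha (C.mem_supp_of_adj_mem_supp hb hab.symm)
      simp [ha, hb]

lemma exists_add_eq_zero_iff_exists_colorable_component :
    (∃ x : V → ℝ, x ≠ 0 ∧ ∀ ⦃a b⦄, G.Adj a b → x a + x b = 0) ↔
      ∃ C : G.ConnectedComponent, (G.induce C.supp).Colorable 2 :=
  ⟨fun ⟨_, hx0, hx⟩ => exists_colorable_component_of_add_eq_zero hx0 hx,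
    fun ⟨C, hC⟩ => exists_add_eq_zero_of_colorable_component C hC⟩

end Bipartite

section LineGraphSpectrum

variable [Fintype V] [DecidableEq V] (G : SimpleGraph V)

lemma maxEig_adjMat_lineGraph [Nonempty V] [Nonempty G.edgeSet] :
    maxEig (adjMat_isHermitian G.lineGraph) = maxEig (signQ_isHermitian G) - 2 := by
  have h := (adjMat_isHermitian G.lineGraph).sSup_spectrum_add_smul_one 2
  rw [← transpose_edgeIncMatrix_mul, sSup_spectrum_transpose_mul_self,
    edgeIncMatrix_mul_transpose] at h
  rw [maxEig_eq_sSup_spectrum, maxEig_eq_sSup_spectrum, h]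
  ring

lemma minEig_adjMat_lineGraph_of_card_lt (h : Fintype.card V < Fintype.card G.edgeSet) :
    minEig (adjMat_isHermitian G.lineGraph) = -2 := by
  have : Nonempty G.edgeSet := Fintype.card_pos_iff.mp (by omega)
  have h2 := (adjMat_isHermitian G.lineGraph).sInf_spectrum_add_smul_one 2
  rw [← transpose_edgeIncMatrix_mul, sInf_spectrum_transpose_mul_self_of_card_lt _ h] at h2
  rw [minEig_eq_sInf_spectrum]
  linarith

lemma posSemidef_signQ : (signQ G).PosSemidef :=
  edgeIncMatrix_mul_transpose G ▸ posSemidef_mul_transpose_self _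

lemma minEig_signQ_eq_zero_iff [Nonempty V] :
    minEig (signQ_isHermitian G) = 0 ↔
      ∃ C : G.ConnectedComponent, (G.induce C.supp).Colorable 2 := by
  rw [minEig_eq_sInf_spectrum, (posSemidef_signQ G).sInf_spectrum_eq_zero_iff,
    ← edgeIncMatrix_mul_transpose, zero_mem_spectrum_mul_transpose_iff]
  simp only [transpose_edgeIncMatrix_mulVec_eq_zero_iff]
  exact exists_add_eq_zero_iff_exists_colorable_component

end LineGraphSpectrum

/-- if `m > n` then `S_L(G) = q₁ ≥ S_Q(G)`, with equality iff `G` has a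
bipartite connected component. -/
theorem lineGraph_spread_of_many_edges {V : Type*} [Fintype V] [DecidableEq V]
    (G : SimpleGraph V) (hmn : Fintype.card V < numEdges G) :
    sprd (adjMat_isHermitian G.lineGraph) = maxEig (signQ_isHermitian G) ∧
    sprd (signQ_isHermitian G) ≤ sprd (adjMat_isHermitian G.lineGraph) ∧
    (sprd (adjMat_isHermitian G.lineGraph) = sprd (signQ_isHermitian G) ↔
      ∃ C : G.ConnectedComponent, (G.induce C.supp).Colorable 2) := by
  have hcard : Fintype.card V < Fintype.card G.edgeSet := by
    rwa [numEdges, Nat.card_eq_fintype_card] at hmn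
  have hE : Nonempty G.edgeSet := Fintype.card_pos_iff.mp (by omega)
  have : Nonempty V := by
    obtain ⟨⟨e, -⟩⟩ := hE
    induction e using Sym2.ind with | _ a _ => exact ⟨a⟩
  have hspread : sprd (adjMat_isHermitian G.lineGraph) = maxEig (signQ_isHermitian G) := by
    rw [sprd, maxEig_adjMat_lineGraph, minEig_adjMat_lineGraph_of_card_lt G hcard]
    ring
  have hqn : 0 ≤ minEig (signQ_isHermitian G) := by
    rw [minEig_eq_sInf_spectrum]
    exact (posSemidef_signQ G).sInf_spectrum_nonneg
  refine ⟨hspread, ?_, ?_⟩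
  · rw [hspread, sprd]
    linarith
  · rw [hspread, sprd, ← minEig_signQ_eq_zero_iff]
    constructor <;> intro h <;> linarith

end SpreadPaper
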